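/- Let w : ℝ → ℝ be a smooth function with supp(w) ⊆ (−1,1) and w(x) = w(−x) for all x∈ℝ. Let η > 0 and A > 0. Then there exists a constant C > 0, depending only on w, η and A, such that for all Q ≥ 1, all δ ∈ (0,1/2) and all x ∈ ℝ, one has | w(‖x‖/δ) − δ·ŵ(0) − δ·Σ_{1 ≤ |j| ≤ Q^η/δ, j∈ℤ} ŵ(δj)·e(jx) | ≤ C·Q^{−A}. -/

import Mathlib

noncomputable section

open MeasureTheory Metric Real Set Function

/-- distance from `x` to the nearest integer -/
def intDist (x : ℝ) : ℝ := |x - (round x : ℝ)|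

/-- `e(x) = exp(2πix)` -/
def e2pi (x : ℝ) : ℂ := Complex.exp (2 * Real.pi * Complex.I * x)

/-- the Fourier transform `ŵ(ξ) = ∫ w(y) e(−yξ) dy` -/
def ftransform (w : ℝ → ℝ) (ξ : ℝ) : ℂ := ∫ y : ℝ, (w y : ℂ) * e2pi (-(y * ξ))

/-!
Poisson summation for `y ↦ w (y / δ)` gives `w (‖x‖ / δ) = ∑ⱼ δ ŵ(δj) e(jx)`: since `δ < 1/2`
only one translate `w ((x + n) / δ)` is nonzero, and evenness of `w` turns `x - round x` into
`‖x‖`. The error is therefore `δ` times the tail of this series over `|j| > Q^η / δ`.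
As `ŵ` is a Schwartz function, `|ξ|^k |ŵ(ξ)| ≤ C` for every `k`; writing
`|ŵ(δj)| ≤ C T^(2-k) (δj)^(-2)` on the tail `δ|j| > T = Q^η` and using `∑_{|j| > M} j⁻² ≤ 4 / M`
bounds the error by `4 C T^(1-k)`, which is at most `4 C Q^(-A)` once `η (k - 1) ≥ A`.
-/

open scoped FourierTransform SchwartzMap

lemma norm_e2pi (t : ℝ) : ‖e2pi t‖ = 1 := by
  simp [e2pi, Complex.norm_exp]

lemma ftransform_eq_fourier (w : ℝ → ℝ) (ξ : ℝ) :
    ftransform w ξ = 𝓕 (fun y => (w y : ℂ)) ξ := by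
  rw [Real.fourier_real_eq_integral_exp_smul]
  refine integral_congr_ae (Filter.Eventually.of_forall fun y => ?_)
  simp only [e2pi, smul_eq_mul]
  rw [mul_comm]
  congr 2
  push_cast
  ring

lemma Real.fourier_comp_div {E : Type*} [NormedAddCommGroup E] [NormedSpace ℂ E]
    (f : ℝ → E) {δ : ℝ} (hδ : 0 < δ) (ξ : ℝ) :
    𝓕 (fun y => f (y / δ)) ξ = δ • 𝓕 f (δ * ξ) := by
  simp only [Real.fourier_real_eq_integral_exp_smul]
  have h : ∀ y : ℝ, -2 * π * y * ξ = -2 * π * (y / δ) * (δ * ξ) := fun y => by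
    field_simp
  simp_rw [h]
  rw [Measure.integral_comp_div (fun y => Complex.exp (↑(-2 * π * y * (δ * ξ)) * Complex.I) • f y),
    abs_of_pos hδ]

lemma tsum_add_int_eq_intDist {E : Type*} [AddCommMonoid E] [TopologicalSpace E] {f : ℝ → E}
    (heven : ∀ y, f (-y) = f y) (hsupp : support f ⊆ Ioo (-(1 / 2)) (1 / 2)) (x : ℝ) :
    ∑' n : ℤ, f (x + n) = f (intDist x) := by
  have hround : f (x + ((-round x : ℤ) : ℝ)) = f (intDist x) := by
    rw [intDist, Int.cast_neg, ← sub_eq_add_neg]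
    rcases abs_choice (x - round x) with h | h <;> rw [h]
    exact (heven _).symm
  rw [tsum_eq_single (-round x) fun n hn => ?_, hround]
  by_contra hfn
  have hnear : |x + n| < 1 / 2 := abs_lt.mpr (hsupp hfn)
  have hint : |((round x + n : ℤ) : ℝ)| < 1 := by
    calc |((round x + n : ℤ) : ℝ)| = |(x + n) - (x - round x)| := by push_cast; ring_nf
      _ ≤ |x + n| + |x - round x| := abs_sub _ _
      _ < 1 / 2 + 1 / 2 := add_lt_add_of_lt_of_le hnear (abs_sub_round x)
      _ = 1 := by norm_num
  have : round x + n = 0 := Int.abs_lt_one_iff.mp (by exact_mod_cast hint)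
  exact hn (by omega)

lemma SchwartzMap.summable_int {E : Type*} [NormedAddCommGroup E] [NormedSpace ℝ E]
    [CompleteSpace E] (f : 𝓢(ℝ, E)) : Summable fun n : ℤ => f n :=
  summable_of_isBigO (Real.summable_abs_int_rpow one_lt_two)
    ((f.isBigO_cocompact_rpow (-2)).comp_tendsto Int.tendsto_coe_cofinite)

lemma hasSum_dilate_poisson {w : ℝ → ℝ} (hw : ContDiff ℝ (⊤ : ℕ∞) w)
    (hwsupp : support w ⊆ Ioo (-1 : ℝ) 1) (hweven : ∀ x, w (-x) = w x)
    {δ : ℝ} (hδ : 0 < δ) (hδ2 : δ < 1 / 2) (x : ℝ) :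
    HasSum (fun j : ℤ => (δ : ℂ) * (ftransform w (δ * j) * e2pi (j * x)))
      (w (intDist x / δ)) := by
  set g : ℝ → ℂ := fun y => w (y / δ)
  have hgsupp : support g ⊆ Ioo (-(1 / 2)) (1 / 2) := fun y hy => by
    have hy' : y / δ ∈ Ioo (-1 : ℝ) 1 := hwsupp (by simpa [g] using hy)
    rw [mem_Ioo, lt_div_iff₀ hδ, div_lt_iff₀ hδ] at hy'
    constructor <;> nlinarith [hy'.1, hy'.2]
  have hgcpt : HasCompactSupport g :=
    HasCompactSupport.of_support_subset_isCompact isCompact_Icc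
      (hgsupp.trans Ioo_subset_Icc_self)
  set G : 𝓢(ℝ, ℂ) := hgcpt.toSchwartzMap
    ((Complex.ofRealCLM.contDiff.comp hw).comp (contDiff_id.div_const δ))
  have hGg : ⇑G = g := rfl
  have hperiodize : ∑' n : ℤ, G (x + n) = w (intDist x / δ) := by
    rw [hGg, tsum_add_int_eq_intDist (fun y => by simp [g, neg_div, hweven]) hgsupp]
  have hcoeff : ∀ j : ℤ, 𝓕 G j * fourier j (x : UnitAddCircle)
      = (δ : ℂ) * (ftransform w (δ * j) * e2pi (j * x)) := fun j => by
    rw [SchwartzMap.fourier_coe, hGg, Real.fourier_comp_div (fun y => (w y : ℂ)) hδ,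
      ftransform_eq_fourier, fourier_coe_apply, e2pi, Complex.real_smul]
    push_cast
    ring_nf
  have hsummable : Summable fun j : ℤ => 𝓕 G j * fourier j (x : UnitAddCircle) :=
    (𝓕 G).summable_int.norm.of_norm_bounded fun j => by
      rw [norm_mul, fourier_apply, Circle.norm_coe, mul_one]
  have hsum := hsummable.hasSum
  rwa [← G.tsum_eq_tsum_fourier x, hperiodize, funext hcoeff] at hsum

lemma summable_int_inv_sq : Summable fun j : ℤ => ((j : ℝ) ^ 2)⁻¹ := by
  simpa only [one_div] using (summable_one_div_int_pow (p := 2)).mpr one_lt_two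

lemma tsum_nat_indicator_inv_sq_le {M : ℝ} (hM : 0 < M) :
    ∑' n : ℕ, {n : ℕ | M < n}.indicator (fun n => ((n : ℝ) ^ 2)⁻¹) n ≤ 2 / M := by
  classical
  refine Real.tsum_le_of_sum_range_le (fun n => indicator_nonneg (fun _ _ => by positivity) n)
    fun K => ?_
  calc ∑ n ∈ Finset.range K, {n : ℕ | M < n}.indicator (fun n => ((n : ℝ) ^ 2)⁻¹) n
      = ∑ n ∈ (Finset.range K).filter (fun n : ℕ => M < n), ((n : ℝ) ^ 2)⁻¹ := by
        rw [Finset.sum_filter]; rfl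
    _ ≤ ∑ n ∈ Finset.Ioo ⌊M⌋₊ K, ((n : ℝ) ^ 2)⁻¹ := by
        refine Finset.sum_le_sum_of_subset_of_nonneg (fun n hn => ?_) fun _ _ _ => by positivity
        simp only [Finset.mem_filter, Finset.mem_range] at hn
        exact Finset.mem_Ioo.mpr ⟨Nat.floor_lt hM.le |>.mpr hn.2, hn.1⟩
    _ ≤ 2 / (⌊M⌋₊ + 1) := sum_Ioo_inv_sq_le _ _
    _ ≤ 2 / M := by gcongr; exact (Nat.lt_floor_add_one M).le

lemma tsum_int_indicator_inv_sq_le {M : ℝ} (hM : 0 < M) :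
    ∑' j : ℤ, {j : ℤ | M < |(j : ℝ)|}.indicator (fun j => ((j : ℝ) ^ 2)⁻¹) j ≤ 4 / M := by
  have hzero : {j : ℤ | M < |(j : ℝ)|}.indicator (fun j => ((j : ℝ) ^ 2)⁻¹) 0 = 0 :=
    indicator_of_notMem (by simpa using hM.le) _
  have heven : ∀ n : ℕ, {j : ℤ | M < |(j : ℝ)|}.indicator (fun j => ((j : ℝ) ^ 2)⁻¹) n
      + {j : ℤ | M < |(j : ℝ)|}.indicator (fun j => ((j : ℝ) ^ 2)⁻¹) (-n)
      = 2 * {n : ℕ | M < n}.indicator (fun n => ((n : ℝ) ^ 2)⁻¹) n := fun n => by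
    simp only [indicator_apply, mem_ofPred_eq, Int.cast_neg, Int.cast_natCast, abs_neg,
      Nat.abs_cast, neg_sq]
    split_ifs <;> ring
  rw [← add_zero (∑' j : ℤ, _), ← hzero, ← tsum_nat_add_neg (summable_int_inv_sq.indicator _),
    tsum_congr heven, tsum_mul_left]
  calc 2 * ∑' n : ℕ, {n : ℕ | M < n}.indicator (fun n => ((n : ℝ) ^ 2)⁻¹) n ≤ 2 * (2 / M) := by
        gcongr; exact tsum_nat_indicator_inv_sq_le hM
    _ = 4 / M := by ring

lemma le_div_pow_mul_inv_sq {k : ℕ} (hk : 2 ≤ k) {a C T ξ : ℝ} (ha : 0 ≤ a) (hT : 0 < T)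
    (hξ : T < |ξ|) (h : |ξ| ^ k * a ≤ C) : a ≤ C / T ^ (k - 2) * (ξ ^ 2)⁻¹ := by
  have hξ0 : 0 < |ξ| := hT.trans hξ
  rw [← div_eq_mul_inv, div_div, ← sq_abs, le_div_iff₀ (by positivity)]
  calc a * (T ^ (k - 2) * |ξ| ^ 2) ≤ a * (|ξ| ^ (k - 2) * |ξ| ^ 2) := by gcongr
    _ = |ξ| ^ k * a := by rw [← pow_add, Nat.sub_add_cancel hk, mul_comm]
    _ ≤ C := h

lemma norm_tsum_indicator_tail_le {E : Type*} [SeminormedAddCommGroup E] {k : ℕ} (hk : 2 ≤ k)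
    {C δ T : ℝ} (hδ : 0 < δ) (hT : 0 < T) {a : ℤ → E}
    (ha : ∀ j : ℤ, |δ * j| ^ k * ‖a j‖ ≤ C) :
    δ * ‖∑' j, {j : ℤ | T / δ < |(j : ℝ)|}.indicator a j‖ ≤ 4 * C / T ^ (k - 1) := by
  have hC : 0 ≤ C := by simpa [zero_pow (by omega : k ≠ 0)] using ha 0
  set c := C / T ^ (k - 2) / δ ^ 2
  have hbound : ∀ j : ℤ, ‖{j : ℤ | T / δ < |(j : ℝ)|}.indicator a j‖
      ≤ c * {j : ℤ | T / δ < |(j : ℝ)|}.indicator (fun j => ((j : ℝ) ^ 2)⁻¹) j := fun j => by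
    by_cases hj : T / δ < |(j : ℝ)|
    · have hTj : T < |δ * j| := by
        rwa [abs_mul, abs_of_pos hδ, ← div_lt_iff₀' hδ]
      simp only [indicator_of_mem (show j ∈ {j : ℤ | T / δ < |(j : ℝ)|} from hj)]
      calc ‖a j‖ ≤ C / T ^ (k - 2) * ((δ * j) ^ 2)⁻¹ :=
            le_div_pow_mul_inv_sq hk (norm_nonneg _) hT hTj (ha j)
        _ = c * ((j : ℝ) ^ 2)⁻¹ := by simp only [c]; ring
    · simp [indicator_of_notMem (show j ∉ {j : ℤ | T / δ < |(j : ℝ)|} from hj)]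
  calc δ * ‖∑' j, {j : ℤ | T / δ < |(j : ℝ)|}.indicator a j‖
      ≤ δ * (c * ∑' j : ℤ, {j : ℤ | T / δ < |(j : ℝ)|}.indicator (fun j => ((j : ℝ) ^ 2)⁻¹) j) := by
        gcongr
        exact tsum_of_norm_bounded ((summable_int_inv_sq.indicator _).hasSum.mul_left c) hbound
    _ ≤ δ * (c * (4 / (T / δ))) := by
        gcongr
        exact tsum_int_indicator_inv_sq_le (div_pos hT hδ)
    _ = 4 * C / T ^ (k - 1) := by
        rw [show k - 1 = k - 2 + 1 by omega, pow_succ]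
        simp only [c]
        field_simp

open scoped Classical in
lemma tsum_sub_sub_tsum_ite_eq_tsum_indicator {E : Type*} [NormedAddCommGroup E] [CompleteSpace E]
    {a : ℤ → E} (ha : Summable a) {M : ℝ} (hM : 0 ≤ M) :
    ∑' j, a j - a 0 - ∑' j : ℤ, (if 1 ≤ |j| ∧ (|j| : ℝ) ≤ M then a j else 0)
      = ∑' j, {j : ℤ | M < |(j : ℝ)|}.indicator a j := by
  have hmid : Summable fun j : ℤ => if 1 ≤ |j| ∧ (|j| : ℝ) ≤ M then a j else 0 :=
    (ha.indicator {j : ℤ | 1 ≤ |j| ∧ (|j| : ℝ) ≤ M}).congr fun j => by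
      simp only [indicator_apply, mem_ofPred_eq]
  have hsplit : ∀ j, a j = ((Pi.single 0 (a 0) : ℤ → E) j
      + if 1 ≤ |j| ∧ (|j| : ℝ) ≤ M then a j else 0)
      + {j : ℤ | M < |(j : ℝ)|}.indicator a j := fun j => by
    rcases eq_or_ne j 0 with rfl | hj
    · simp [hM]
    · have hj1 : 1 ≤ |j| := Int.one_le_abs hj
      by_cases hjM : (|j| : ℝ) ≤ M
      · simp [hj, hj1, hjM]
      · simp [hj, hj1, hjM, lt_of_not_ge hjM]
  have hsingle := (hasSum_pi_single (0 : ℤ) (a 0)).summable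
  rw [tsum_congr hsplit, (hsingle.add hmid).tsum_add (ha.indicator _), hsingle.tsum_add hmid,
    tsum_pi_single]
  abel

lemma exists_pow_mul_norm_ftransform_le {w : ℝ → ℝ} (hw : ContDiff ℝ (⊤ : ℕ∞) w)
    (hwc : HasCompactSupport w) (k : ℕ) :
    ∃ C > 0, ∀ ξ : ℝ, |ξ| ^ k * ‖ftransform w ξ‖ ≤ C := by
  let W : 𝓢(ℝ, ℂ) := (hwc.comp_left Complex.ofReal_zero).toSchwartzMap
    (Complex.ofRealCLM.contDiff.comp hw)
  have hW : ⇑W = fun y => (w y : ℂ) := rfl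
  obtain ⟨C, hC0, hC⟩ := (𝓕 W).decay k 0
  refine ⟨C, hC0, fun ξ => ?_⟩
  simpa only [norm_iteratedFDeriv_zero, Real.norm_eq_abs, ftransform_eq_fourier,
    SchwartzMap.fourier_coe, hW] using hC ξ

lemma inv_rpow_pow_le_rpow_neg {Q η A : ℝ} {n : ℕ} (hQ : 1 ≤ Q) (h : A ≤ η * n) :
    ((Q ^ η) ^ n)⁻¹ ≤ Q ^ (-A) := by
  have hQ0 : 0 < Q := one_pos.trans_le hQ
  rw [← rpow_natCast, ← rpow_mul hQ0.le, rpow_neg hQ0.le]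
  exact inv_anti₀ (rpow_pos_of_pos hQ0 A) (rpow_le_rpow_of_exponent_le hQ h)

open scoped Classical in
theorem statement10_general
    (w : ℝ → ℝ) (hw : ContDiff ℝ (⊤ : ℕ∞) w)
    (hwsupp : support w ⊆ Ioo (-1 : ℝ) 1)
    (hweven : ∀ x, w (-x) = w x)
    (η A : ℝ) (hη : 0 < η) :
    ∃ C > 0, ∀ Q : ℝ, 1 ≤ Q → ∀ δ : ℝ, 0 < δ → δ < 1 / 2 → ∀ x : ℝ,
      ‖((w (intDist x / δ) : ℂ) - (δ : ℂ) * ftransform w 0 -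
          (δ : ℂ) * ∑' j : ℤ,
            (if 1 ≤ |j| ∧ (|j| : ℝ) ≤ Q ^ η / δ then
              ftransform w (δ * (j : ℝ)) * e2pi ((j : ℝ) * x) else 0))‖
        ≤ C * Q ^ (-A) := by
  set k := ⌈A / η⌉₊ + 2
  have hk : A ≤ η * (k - 1 : ℕ) := by
    rw [show k - 1 = ⌈A / η⌉₊ + 1 by omega, ← div_le_iff₀' hη]
    push_cast
    linarith [Nat.le_ceil (A / η)]
  obtain ⟨C, hC0, hC⟩ := exists_pow_mul_norm_ftransform_le hw
    (HasCompactSupport.of_support_subset_isCompact isCompact_Icc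
      (hwsupp.trans Ioo_subset_Icc_self)) k
  refine ⟨4 * C, by positivity, fun Q hQ δ hδ hδ2 x => ?_⟩
  set F : ℤ → ℂ := fun j => ftransform w (δ * j) * e2pi (j * x)
  have hpoisson := hasSum_dilate_poisson hw hwsupp hweven hδ hδ2 x
  have hF : Summable F :=
    (summable_mul_left_iff (by exact_mod_cast hδ.ne')).mp hpoisson.summable
  have hF0 : ftransform w 0 = F 0 := by simp [F, e2pi]
  have hFdecay : ∀ j : ℤ, |δ * j| ^ k * ‖F j‖ ≤ C := fun j => by
    simpa only [F, norm_mul, norm_e2pi, mul_one] using hC (δ * j)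
  have hT : 0 < Q ^ η := rpow_pos_of_pos (one_pos.trans_le hQ) η
  rw [← hpoisson.tsum_eq, tsum_mul_left, hF0, ← mul_sub, ← mul_sub,
    tsum_sub_sub_tsum_ite_eq_tsum_indicator hF (div_pos hT hδ).le, norm_mul, Complex.norm_real,
    Real.norm_of_nonneg hδ.le]
  calc _ ≤ 4 * C / (Q ^ η) ^ (k - 1) := norm_tsum_indicator_tail_le (by omega) hδ hT hFdecay
    _ ≤ 4 * C * Q ^ (-A) := by
      rw [div_eq_mul_inv]
      gcongr
      exact inv_rpow_pow_le_rpow_neg hQ hk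

open scoped Classical in
theorem statement10
    (w : ℝ → ℝ) (hw : ContDiff ℝ (⊤ : ℕ∞) w)
    (hwsupp : support w ⊆ Ioo (-1 : ℝ) 1)
    (hweven : ∀ x, w (-x) = w x)
    (η A : ℝ) (hη : 0 < η) (hA : 0 < A) :
    ∃ C > 0, ∀ Q : ℝ, 1 ≤ Q → ∀ δ : ℝ, 0 < δ → δ < 1 / 2 → ∀ x : ℝ,
      ‖((w (intDist x / δ) : ℂ) - (δ : ℂ) * ftransform w 0 -
          (δ : ℂ) * ∑' j : ℤ,
            (if 1 ≤ |j| ∧ (|j| : ℝ) ≤ Q ^ η / δ then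
              ftransform w (δ * (j : ℝ)) * e2pi ((j : ℝ) * x) else 0))‖
        ≤ C * Q ^ (-A) :=
  statement10_general w hw hwsupp hweven η A hη
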